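/- arXiv:2207.10868 — 7 statements merged into one kernel-verified Lean document; each statement's English description precedes it below -/
import Mathlib

section
/- Consider a fixed node q whose state evolves as x_q(k+1) = a_{qq} x_q(k) + ∑_{j ≠ q} a_{qj} x_j(k), with a_{qq} < 1, a_{qj} ≥ 0, ∑_j a_{qj} ≤ 1, and x_q(0) = 0. Then for every 1 ≤ p < ∞ and horizon k_f: ∑_{k=0}^{k_f} |x_q(k)|^p ≤ ∑_{j ≠ q} (a_{qj}/(1 - a_{qq})) ∑_{k=0}^{k_f} |x_j(k)|^p. -/
/-- Jensen-type inequality for weights summing to at most 1. -/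
lemma jensen_rpow_le {ι : Type*} (s : Finset ι) (w z : ι → ℝ)
    (hw : ∀ i ∈ s, 0 ≤ w i) (hw' : ∑ i ∈ s, w i ≤ 1)
    (hz : ∀ i ∈ s, 0 ≤ z i) {p : ℝ} (hp : 1 ≤ p) :
    (∑ i ∈ s, w i * z i) ^ p ≤ ∑ i ∈ s, w i * z i ^ p := by
  set S := ∑ i ∈ s, w i with hS
  rcases eq_or_lt_of_le (Finset.sum_nonneg hw : (0:ℝ) ≤ S) with h0 | h0
  · have hall : ∀ i ∈ s, w i = 0 := by
      intro i hi
      exact le_antisymm (le_trans (Finset.single_le_sum hw hi) (le_of_eq h0.symm)) (hw i hi)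
    have h1 : ∑ i ∈ s, w i * z i = 0 := Finset.sum_eq_zero fun i hi => by rw [hall i hi, zero_mul]
    have h2 : ∑ i ∈ s, w i * z i ^ p = 0 := Finset.sum_eq_zero fun i hi => by
      rw [hall i hi, zero_mul]
    rw [h1, h2, Real.zero_rpow (by linarith : p ≠ 0)]
  · have key := Real.rpow_arith_mean_le_arith_mean_rpow s (fun i => w i / S) z
      (fun i hi => div_nonneg (hw i hi) h0.le)
      (by rw [← Finset.sum_div, div_self h0.ne']) hz hp
    have hrw : ∑ i ∈ s, (w i / S) * z i = (∑ i ∈ s, w i * z i) / S := by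
      rw [Finset.sum_div]; exact Finset.sum_congr rfl fun i _ => by ring
    have hrw2 : ∑ i ∈ s, (w i / S) * z i ^ p = (∑ i ∈ s, w i * z i ^ p) / S := by
      rw [Finset.sum_div]; exact Finset.sum_congr rfl fun i _ => by ring
    rw [hrw, hrw2, Real.div_rpow (Finset.sum_nonneg fun i hi =>
      mul_nonneg (hw i hi) (hz i hi)) h0.le] at key
    have hSp : S ^ p ≤ S := by
      calc S ^ p = S ^ p := rfl
        _ ≤ S ^ (1:ℝ) := Real.rpow_le_rpow_of_exponent_ge h0 hw' hp
        _ = S := Real.rpow_one S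
    have hnum : (∑ i ∈ s, w i * z i) ^ p ≤ S ^ p * ((∑ i ∈ s, w i * z i ^ p) / S) := by
      have := mul_le_mul_of_nonneg_left key (le_of_lt (Real.rpow_pos_of_pos h0 p))
      calc (∑ i ∈ s, w i * z i) ^ p
          = S ^ p * ((∑ i ∈ s, w i * z i) ^ p / S ^ p) := by
            field_simp
            exact (mul_div_cancel_right₀ _ (Real.rpow_pos_of_pos h0 p).ne').symm
        _ ≤ S ^ p * ((∑ i ∈ s, w i * z i ^ p) / S) := this
    calc (∑ i ∈ s, w i * z i) ^ p ≤ S ^ p * ((∑ i ∈ s, w i * z i ^ p) / S) := hnum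
      _ ≤ S * ((∑ i ∈ s, w i * z i ^ p) / S) := by
          apply mul_le_mul_of_nonneg_right hSp
          exact div_nonneg (Finset.sum_nonneg fun i hi =>
            mul_nonneg (hw i hi) (Real.rpow_nonneg (hz i hi) p)) h0.le
      _ = ∑ i ∈ s, w i * z i ^ p := by field_simp; exact mul_div_cancel_left₀ _ h0.ne'

/-- If node `q` evolves as
`x_q(k+1) = a_{qq} x_q(k) + ∑_{j ≠ q} a_{qj} x_j(k)` with `a_{qj} ≥ 0`,
`∑_j a_{qj} ≤ 1`, `a_{qq} < 1`, and `x_q(0) = 0`, then for every `1 ≤ p < ∞`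
and horizon `k_f`:
`∑_{k=0}^{k_f} |x_q(k)|^p ≤ ∑_{j ≠ q} (a_{qj}/(1 - a_{qq})) ∑_{k=0}^{k_f} |x_j(k)|^p`. -/
theorem node_lp_inequality {n : ℕ} (x : Fin n → ℕ → ℝ) (q : Fin n)
    (a : Fin n → ℝ) (ha : ∀ j, 0 ≤ a j) (hsum : ∑ j, a j ≤ 1) (haq : a q < 1)
    (h0 : x q 0 = 0)
    (hrec : ∀ k, x q (k + 1) = a q * x q k + ∑ j ∈ Finset.univ.erase q, a j * x j k)
    (p : ℝ) (hp : 1 ≤ p) (kf : ℕ) :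
    ∑ k ∈ Finset.range (kf + 1), |x q k| ^ p ≤
      ∑ j ∈ Finset.univ.erase q,
        (a j / (1 - a q)) * ∑ k ∈ Finset.range (kf + 1), |x j k| ^ p := by
  have hα : (0:ℝ) < 1 - a q := by linarith
  set Y : ℕ → ℝ := fun k => |x q k| ^ p with hY
  set B : ℕ → ℝ := fun k => ∑ j ∈ Finset.univ.erase q, a j * |x j k| ^ p with hB
  have hYnn : ∀ k, 0 ≤ Y k := fun k => Real.rpow_nonneg (abs_nonneg _) p
  have hBnn : ∀ k, 0 ≤ B k := fun k => Finset.sum_nonneg fun j _ =>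
    mul_nonneg (ha j) (Real.rpow_nonneg (abs_nonneg _) p)
  -- step inequality
  have hstep : ∀ k, Y (k + 1) ≤ a q * Y k + B k := by
    intro k
    have hxeq : x q (k + 1) = ∑ j, a j * x j k := by
      rw [hrec k, ← Finset.add_sum_erase _ _ (Finset.mem_univ q)]
    have habs : |x q (k + 1)| ≤ ∑ j, a j * |x j k| := by
      rw [hxeq]
      calc |∑ j, a j * x j k| ≤ ∑ j, |a j * x j k| := Finset.abs_sum_le_sum_abs _ _
        _ = ∑ j, a j * |x j k| := Finset.sum_congr rfl fun j _ => by
            rw [abs_mul, abs_of_nonneg (ha j)]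
    have h1 : Y (k + 1) ≤ (∑ j, a j * |x j k|) ^ p :=
      Real.rpow_le_rpow (abs_nonneg _) habs (by linarith)
    have h2 : (∑ j, a j * |x j k|) ^ p ≤ ∑ j, a j * |x j k| ^ p :=
      jensen_rpow_le Finset.univ a (fun j => |x j k|) (fun j _ => ha j) hsum
        (fun j _ => abs_nonneg _) hp
    have h3 : ∑ j, a j * |x j k| ^ p = a q * Y k + B k := by
      rw [← Finset.add_sum_erase _ _ (Finset.mem_univ q)]
    linarith
  -- summed inequality
  have hsumY : ∑ k ∈ Finset.range (kf + 1), Y k ≤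
      a q * ∑ k ∈ Finset.range (kf + 1), Y k + ∑ k ∈ Finset.range (kf + 1), B k := by
    have e1 : ∑ k ∈ Finset.range (kf + 1), Y k = ∑ k ∈ Finset.range kf, Y (k + 1) := by
      rw [Finset.sum_range_succ'] ; simp [hY, h0]
      rw [Real.zero_rpow (by linarith : p ≠ 0)]
    have e2 : ∑ k ∈ Finset.range kf, Y (k + 1) ≤
        ∑ k ∈ Finset.range kf, (a q * Y k + B k) :=
      Finset.sum_le_sum fun k _ => hstep k
    have e3 : ∑ k ∈ Finset.range kf, (a q * Y k + B k) ≤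
        ∑ k ∈ Finset.range (kf + 1), (a q * Y k + B k) :=
      Finset.sum_le_sum_of_subset_of_nonneg
        (Finset.range_subset_range.2 (Nat.le_succ kf))
        (fun k _ _ => add_nonneg (mul_nonneg (ha q) (hYnn k)) (hBnn k))
    calc ∑ k ∈ Finset.range (kf + 1), Y k
        = ∑ k ∈ Finset.range kf, Y (k + 1) := e1
      _ ≤ ∑ k ∈ Finset.range (kf + 1), (a q * Y k + B k) := le_trans e2 e3
      _ = a q * ∑ k ∈ Finset.range (kf + 1), Y k + ∑ k ∈ Finset.range (kf + 1), B k := by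
          rw [Finset.sum_add_distrib, Finset.mul_sum]
  have hmain : ∑ k ∈ Finset.range (kf + 1), Y k ≤
      (∑ k ∈ Finset.range (kf + 1), B k) / (1 - a q) := by
    rw [le_div_iff₀ hα]
    nlinarith [hsumY]
  calc ∑ k ∈ Finset.range (kf + 1), |x q k| ^ p
      ≤ (∑ k ∈ Finset.range (kf + 1), B k) / (1 - a q) := hmain
    _ = ∑ j ∈ Finset.univ.erase q,
        (a j / (1 - a q)) * ∑ k ∈ Finset.range (kf + 1), |x j k| ^ p := by
        rw [hB]
        rw [Finset.sum_comm, Finset.sum_div]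
        exact Finset.sum_congr rfl fun j _ => by
          rw [Finset.mul_sum, Finset.sum_div]
          exact Finset.sum_congr rfl fun k _ => by ring
end

section
/- Let A be an n×n substochastic nonnegative matrix (a_{ij} ≥ 0, ∑_j a_{ij} ≤ 1), and let Γ be its digraph with an edge from j to i iff a_{ij} > 0. Fix a source s, a target q* ≠ s, and a vertex set C not containing s or q* such that every directed path in Γ from s to q* meets C. Define for each node i the finite-horizon l_∞ gain G_∞(i, k_f) = sup over inputs u with max_{0≤k≤k_f}|u(k)| ≤ 1 of max_{0≤k≤k_f} |x_i(k)|, where X(k+1) = A X(k) + e_s u(k), X(0) = 0. Then G_∞(q*, k_f) ≤ max_{c ∈ C} G_∞(c, k_f). -/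
/-- Zero-initial-state trajectory of `X(k+1) = A X(k) + e_s u(k)`. -/
def netTraj {n : ℕ} (A : Matrix (Fin n) (Fin n) ℝ) (s : Fin n) (u : ℕ → ℝ) :
    ℕ → Fin n → ℝ
  | 0 => 0
  | k + 1 => A.mulVec (netTraj A s u k) + Pi.single s (u k)

/-- A directed path of length `L` from `s` to `t` in the digraph of `A`
(edge from `j` to `i` iff `A i j > 0`), given by its vertex sequence `p`. -/
def IsDirPath {n : ℕ} (A : Matrix (Fin n) (Fin n) ℝ) (s t : Fin n)
    (L : ℕ) (p : ℕ → Fin n) : Prop :=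
  p 0 = s ∧ p L = t ∧ ∀ k < L, 0 < A (p (k + 1)) (p k)

/-- Finite-horizon `l_∞` gain of the network from input at `s` to output at node `i`. -/
noncomputable def linfGain {n : ℕ} (A : Matrix (Fin n) (Fin n) ℝ) (s i : Fin n)
    (kf : ℕ) : ℝ :=
  sSup {g : ℝ | ∃ u : ℕ → ℝ, (∀ k ≤ kf, |u k| ≤ 1) ∧
    g = (Finset.range (kf + 1)).sup' (by simp) (fun k => |netTraj A s u k i|)}

/-- Crude a-priori bound on the trajectory of a substochastic system. -/
lemma netTraj_abs_le {n : ℕ} (A : Matrix (Fin n) (Fin n) ℝ)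
    (hA : ∀ i j, 0 ≤ A i j) (hrow : ∀ i, ∑ j, A i j ≤ 1)
    (s : Fin n) (u : ℕ → ℝ) (K : ℕ) (hu : ∀ k < K, |u k| ≤ 1) :
    ∀ k ≤ K, ∀ i, |netTraj A s u k i| ≤ (k : ℝ) := by
  intro k
  induction k with
  | zero => intro _ i; simp [netTraj]
  | succ k ih =>
    intro hk i
    have hkK : k ≤ K := by omega
    have hexp : netTraj A s u (k+1) i =
        (∑ j, A i j * netTraj A s u k j) + (Pi.single s (u k) : Fin n → ℝ) i := by
      simp [netTraj, Matrix.mulVec, dotProduct]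
    rw [hexp]
    have h1 : |∑ j, A i j * netTraj A s u k j| ≤ (k : ℝ) := by
      calc |∑ j, A i j * netTraj A s u k j| ≤ ∑ j, |A i j * netTraj A s u k j| :=
            Finset.abs_sum_le_sum_abs _ _
        _ ≤ ∑ j, A i j * (k : ℝ) := by
            apply Finset.sum_le_sum; intro j _
            rw [abs_mul, abs_of_nonneg (hA i j)]
            exact mul_le_mul_of_nonneg_left (ih hkK j) (hA i j)
        _ = (∑ j, A i j) * (k : ℝ) := by rw [Finset.sum_mul]
        _ ≤ 1 * (k : ℝ) := mul_le_mul_of_nonneg_right (hrow i) (Nat.cast_nonneg k)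
        _ = (k : ℝ) := one_mul _
    have h2 : |(Pi.single s (u k) : Fin n → ℝ) i| ≤ 1 := by
      rcases eq_or_ne i s with rfl | h
      · simpa using hu k (by omega)
      · simp [Pi.single_eq_of_ne h]
    calc |(∑ j, A i j * netTraj A s u k j) + (Pi.single s (u k) : Fin n → ℝ) i|
        ≤ |∑ j, A i j * netTraj A s u k j| + |(Pi.single s (u k) : Fin n → ℝ) i| := abs_add_le _ _
      _ ≤ (k : ℝ) + 1 := add_le_add h1 h2
      _ = ((k + 1 : ℕ) : ℝ) := by push_cast; ring

/-- For substochastic nonnegative `A`, source `s`, target `q* ≠ s`,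
and separating cutset `C` (not containing `s` or `q*`, meeting every directed
path from `s` to `q*`), the finite-horizon `l_∞` gain at `q*` is at most the
maximum `l_∞` gain over the cutset. -/
theorem linf_gain_cutset_bound {n : ℕ} (A : Matrix (Fin n) (Fin n) ℝ)
    (hA : ∀ i j, 0 ≤ A i j) (hrow : ∀ i, ∑ j, A i j ≤ 1)
    (s qstar : Fin n) (hne : qstar ≠ s)
    (C : Finset (Fin n)) (hCne : C.Nonempty) (hsC : s ∉ C) (hqC : qstar ∉ C)
    (hcut : ∀ L : ℕ, ∀ p : ℕ → Fin n,
      IsDirPath A s qstar L p → ∃ k ≤ L, p k ∈ C)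
    (kf : ℕ) :
    linfGain A s qstar kf ≤ C.sup' hCne (fun c => linfGain A s c kf) := by
  -- D : nodes from which qstar is reachable avoiding C
  set D : Fin n → Prop := fun j => ∃ L p, IsDirPath A j qstar L p ∧ ∀ k ≤ L, p k ∉ C with hD
  have hqD : D qstar := ⟨0, fun _ => qstar, ⟨rfl, rfl, by omega⟩, fun _ _ => hqC⟩
  have hsD : ¬ D s := by
    rintro ⟨L, p, hp, havoid⟩
    obtain ⟨k, hk, hkC⟩ := hcut L p hp
    exact havoid k hk hkC
  have hstep : ∀ i j, D i → 0 < A i j → j ∉ C → D j := by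
    rintro i j ⟨L, p, hp, hav⟩ hij hjC
    refine ⟨L + 1, fun k => if k = 0 then j else p (k - 1), ⟨by simp, by simp [hp.2.1], ?_⟩, ?_⟩
    · intro k hk
      rcases Nat.eq_zero_or_pos k with rfl | hk0
      · simpa [hp.1] using hij
      · have h1 : k ≠ 0 := hk0.ne'
        have h2 : k + 1 ≠ 0 := by omega
        simp only [h1, h2, if_false]
        have h3 := hp.2.2 (k - 1) (by omega)
        have hk1 : k - 1 + 1 = k := by omega
        rwa [hk1] at h3
    · intro k hk
      rcases Nat.eq_zero_or_pos k with rfl | hk0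
      · simpa using hjC
      · have h1 : k ≠ 0 := hk0.ne'
        simp only [h1, if_false]
        exact hav (k - 1) (by omega)
  -- key trajectory bound
  have key : ∀ u : ℕ → ℝ, (∀ k ≤ kf, |u k| ≤ 1) →
      ∀ k ≤ kf, ∀ i, D i → |netTraj A s u k i| ≤
        C.sup' hCne (fun c => (Finset.range (kf + 1)).sup' (by simp)
          (fun m => |netTraj A s u m c|)) := by
    intro u hu
    set M := C.sup' hCne (fun c => (Finset.range (kf + 1)).sup' (by simp)
      (fun m => |netTraj A s u m c|)) with hM
    have hM0 : (0 : ℝ) ≤ M := by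
      obtain ⟨c, hc⟩ := hCne
      calc (0 : ℝ) = |netTraj A s u 0 c| := by simp [netTraj]
        _ ≤ (Finset.range (kf + 1)).sup' (by simp) (fun m => |netTraj A s u m c|) :=
            Finset.le_sup' (fun m => |netTraj A s u m c|)
              (Finset.mem_range.mpr (Nat.succ_pos kf))
        _ ≤ M := by
            rw [hM]
            exact Finset.le_sup' (fun c => (Finset.range (kf + 1)).sup' (by simp)
              (fun m => |netTraj A s u m c|)) hc
    intro k
    induction k with
    | zero => intro _ i _; simpa [netTraj] using hM0
    | succ k ih =>
      intro hk i hiD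
      have hkK : k ≤ kf := by omega
      have hiS : i ≠ s := fun h => hsD (h ▸ hiD)
      have hexp : netTraj A s u (k+1) i = ∑ j, A i j * netTraj A s u k j := by
        simp [netTraj, Matrix.mulVec, dotProduct, Pi.single_eq_of_ne hiS]
      rw [hexp]
      have hterm : ∀ j, A i j * |netTraj A s u k j| ≤ A i j * M := by
        intro j
        rcases lt_or_eq_of_le (hA i j) with hpos | hz
        · refine mul_le_mul_of_nonneg_left ?_ (hA i j)
          by_cases hjC : j ∈ C
          · calc |netTraj A s u k j|
                ≤ (Finset.range (kf + 1)).sup' (by simp) (fun m => |netTraj A s u m j|) :=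
                  Finset.le_sup' (fun m => |netTraj A s u m j|)
                    (Finset.mem_range.mpr (by omega))
              _ ≤ M := by
                  rw [hM]
                  exact Finset.le_sup' (fun c => (Finset.range (kf + 1)).sup' (by simp)
                    (fun m => |netTraj A s u m c|)) hjC
          · exact ih hkK j (hstep i j hiD hpos hjC)
        · rw [← hz]; simp
      calc |∑ j, A i j * netTraj A s u k j|
          ≤ ∑ j, A i j * |netTraj A s u k j| := by
            refine le_trans (Finset.abs_sum_le_sum_abs _ _) ?_
            apply Finset.sum_le_sum; intro j _
            rw [abs_mul, abs_of_nonneg (hA i j)]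
        _ ≤ ∑ j, A i j * M := Finset.sum_le_sum (fun j _ => hterm j)
        _ = (∑ j, A i j) * M := by rw [Finset.sum_mul]
        _ ≤ 1 * M := mul_le_mul_of_nonneg_right (hrow i) hM0
        _ = M := one_mul M
  -- boundedness and nonemptiness of the gain sets
  have hbdd : ∀ i : Fin n, BddAbove {g : ℝ | ∃ u : ℕ → ℝ, (∀ k ≤ kf, |u k| ≤ 1) ∧
      g = (Finset.range (kf + 1)).sup' (by simp) (fun k => |netTraj A s u k i|)} := by
    intro i
    refine ⟨(kf : ℝ), ?_⟩
    rintro g ⟨u, hu, rfl⟩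
    apply Finset.sup'_le
    intro m hm
    have hm' : m ≤ kf := by simpa [Nat.lt_succ_iff] using Finset.mem_range.mp hm
    calc |netTraj A s u m i| ≤ (m : ℝ) :=
          netTraj_abs_le A hA hrow s u (kf + 1) (fun k hk => hu k (by omega)) m (by omega) i
      _ ≤ (kf : ℝ) := by exact_mod_cast hm'
  have hnon : ∀ i : Fin n, Set.Nonempty {g : ℝ | ∃ u : ℕ → ℝ, (∀ k ≤ kf, |u k| ≤ 1) ∧
      g = (Finset.range (kf + 1)).sup' (by simp) (fun k => |netTraj A s u k i|)} := by
    intro i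
    exact ⟨_, (fun _ => 0), fun k _ => by simp, rfl⟩
  -- final assembly
  rw [linfGain]
  apply csSup_le (hnon qstar)
  rintro g ⟨u, hu, rfl⟩
  have h1 : (Finset.range (kf + 1)).sup' (by simp) (fun k => |netTraj A s u k qstar|) ≤
      C.sup' hCne (fun c => (Finset.range (kf + 1)).sup' (by simp)
        (fun m => |netTraj A s u m c|)) := by
    apply Finset.sup'_le
    intro m hm
    exact key u hu m (by simpa [Nat.lt_succ_iff] using Finset.mem_range.mp hm) qstar hqD
  refine le_trans h1 (Finset.sup'_le _ _ ?_)
  intro c hc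
  have h2 : (Finset.range (kf + 1)).sup' (by simp) (fun m => |netTraj A s u m c|) ≤
      linfGain A s c kf := le_csSup (hbdd c) ⟨u, hu, rfl⟩
  exact le_trans h2 (Finset.le_sup' (fun c => linfGain A s c kf) hc)
end

section
/- Let A be substochastic nonnegative, X(k+1) = A X(k) + e_s u(k) with X(0) = 0, and C a separating cutset between source s and target q*. For any fixed input signal u, for every k: x_{q*}(k) ≤ max(0, max_{c ∈ C} max_{0 ≤ j ≤ k} x_c(j)). -/
/-- For substochastic nonnegative `A`, any input `u`, and a
separating cutset `C` between `s` and `q*`, the response at the target satisfies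
`x_{q*}(k) ≤ max(0, max_{c ∈ C} max_{0 ≤ j ≤ k} x_c(j))` for every `k`. -/
theorem pointwise_upper_bound_cutset {n : ℕ} (A : Matrix (Fin n) (Fin n) ℝ)
    (hA : ∀ i j, 0 ≤ A i j) (hrow : ∀ i, ∑ j, A i j ≤ 1)
    (s qstar : Fin n) (hne : qstar ≠ s)
    (C : Finset (Fin n)) (hsC : s ∉ C) (hqC : qstar ∉ C)
    (hcut : ∀ L : ℕ, ∀ p : ℕ → Fin n,
      IsDirPath A s qstar L p → ∃ k ≤ L, p k ∈ C)
    (u : ℕ → ℝ) :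
    ∀ k : ℕ, netTraj A s u k qstar ≤ 0 ∨
      ∃ c ∈ C, ∃ j ≤ k, netTraj A s u k qstar ≤ netTraj A s u j c := by
  classical
  set x := netTraj A s u with hxdef
  -- nodes that reach qstar avoiding C
  let Reach : Fin n → Prop := fun v => ∃ (L : ℕ) (p : ℕ → Fin n), p 0 = v ∧ p L = qstar ∧
    (∀ k < L, 0 < A (p (k+1)) (p k)) ∧ ∀ k ≤ L, p k ∉ C
  have hRq : Reach qstar := ⟨0, fun _ => qstar, rfl, rfl, by omega,
    fun k _ => hqC⟩
  have hRs : ¬ Reach s := by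
    rintro ⟨L, p, h0, hL, hedge, havoid⟩
    obtain ⟨k, hk, hkC⟩ := hcut L p ⟨h0, hL, hedge⟩
    exact havoid k hk hkC
  have hRclosed : ∀ v w, Reach v → 0 < A v w → w ∉ C → Reach w := by
    rintro v w ⟨L, p, h0, hL, hedge, havoid⟩ hAvw hwC
    refine ⟨L + 1, fun k => if k = 0 then w else p (k - 1), by simp, by simp [hL], ?_, ?_⟩
    · intro k hk
      rcases Nat.eq_zero_or_pos k with rfl | hkpos
      · simpa [h0] using hAvw
      · have h1 : ¬ (k = 0) := by omega
        have h2 : ¬ (k + 1 = 0) := by omega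
        simp only [h1, h2, if_false]
        have : k - 1 < L := by omega
        have := hedge (k - 1) this
        have hkk : k - 1 + 1 = k + 1 - 1 := by omega
        rwa [hkk] at this
    · intro k hk
      rcases Nat.eq_zero_or_pos k with rfl | hkpos
      · simpa using hwC
      · have h1 : ¬ (k = 0) := by omega
        simp only [h1, if_false]
        exact havoid (k - 1) (by omega)
  -- the bound
  let S : ℕ → Finset ℝ := fun k =>
    insert 0 ((C ×ˢ Finset.range (k+1)).image fun cj => x cj.2 cj.1)
  have hSne : ∀ k, (S k).Nonempty := fun k => ⟨0, Finset.mem_insert_self _ _⟩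
  let M : ℕ → ℝ := fun k => (S k).max' (hSne k)
  have hM0 : ∀ k, (0:ℝ) ≤ M k := fun k =>
    Finset.le_max' _ _ (Finset.mem_insert_self _ _)
  have hMmem : ∀ k c j, c ∈ C → j ≤ k → x j c ≤ M k := by
    intro k c j hc hj
    refine Finset.le_max' _ _ ?_
    refine Finset.mem_insert_of_mem (Finset.mem_image.mpr ⟨(c, j), ?_, rfl⟩)
    simp [Finset.mem_product, hc, Nat.lt_succ_of_le hj]
  have hMmono : ∀ k, M k ≤ M (k+1) := by
    intro k
    apply Finset.max'_subset
    apply Finset.insert_subset_insert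
    apply Finset.image_subset_image
    apply Finset.product_subset_product_right
    intro j hj
    simp only [Finset.mem_range] at *
    omega
  -- main induction
  have main : ∀ k v, Reach v → x k v ≤ M k := by
    intro k
    induction k with
    | zero =>
      intro v _
      have : x 0 v = 0 := rfl
      rw [this]; exact hM0 0
    | succ k ih =>
      intro v hv
      have hvs : v ≠ s := fun h => hRs (h ▸ hv)
      have hstep : x (k+1) v = ∑ w, A v w * x k w := by
        simp [hxdef, netTraj, Matrix.mulVec, dotProduct,
          Pi.single_eq_of_ne hvs]
      rw [hstep]
      have hterm : ∀ w, A v w * x k w ≤ A v w * M (k+1) := by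
        intro w
        rcases eq_or_lt_of_le (hA v w) with h | h
        · simp [← h]
        · apply mul_le_mul_of_nonneg_left _ (hA v w)
          by_cases hwC : w ∈ C
          · exact hMmem (k+1) w k hwC (Nat.le_succ k)
          · exact (ih w (hRclosed v w hv h hwC)).trans (hMmono k)
      calc ∑ w, A v w * x k w ≤ ∑ w, A v w * M (k+1) :=
            Finset.sum_le_sum fun w _ => hterm w
        _ = (∑ w, A v w) * M (k+1) := by rw [Finset.sum_mul]
        _ ≤ 1 * M (k+1) := mul_le_mul_of_nonneg_right (hrow v) (hM0 (k+1))
        _ = M (k+1) := one_mul _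
  intro k
  have hb := main k qstar hRq
  have hMS : M k ∈ S k := Finset.max'_mem _ _
  rcases Finset.mem_insert.mp hMS with h0 | hmem
  · left; rw [h0] at hb; exact hb
  · obtain ⟨⟨c, j⟩, hcj, heq⟩ := Finset.mem_image.mp hmem
    rw [Finset.mem_product, Finset.mem_range] at hcj
    right
    exact ⟨c, hcj.1, j, by omega, by rw [← heq] at hb; exact hb⟩
end

section
/- Let A be substochastic nonnegative, X(k+1) = A X(k) + e_s u(k) with X(0) = 0, and C a separating cutset between s and q*. Then for every k: x_{q*}(k) ≥ min(0, min_{c ∈ C} min_{0 ≤ j ≤ k} x_c(j)). -/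
namespace PLBaux

/-- The finite set of candidate lower-bound values up to time `k`. -/
noncomputable def Dset {n : ℕ} (A : Matrix (Fin n) (Fin n) ℝ) (s : Fin n) (u : ℕ → ℝ)
    (C : Finset (Fin n)) (k : ℕ) : Finset ℝ :=
  insert 0 ((Finset.range (k + 1) ×ˢ C).image fun p => netTraj A s u p.1 p.2)

lemma Dset_nonempty {n : ℕ} (A : Matrix (Fin n) (Fin n) ℝ) (s : Fin n) (u : ℕ → ℝ)
    (C : Finset (Fin n)) (k : ℕ) : (Dset A s u C k).Nonempty :=
  ⟨0, Finset.mem_insert_self _ _⟩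

/-- `m(k) = min(0, min_{c∈C, j≤k} x_c(j))`. -/
noncomputable def mval {n : ℕ} (A : Matrix (Fin n) (Fin n) ℝ) (s : Fin n) (u : ℕ → ℝ)
    (C : Finset (Fin n)) (k : ℕ) : ℝ :=
  (Dset A s u C k).min' (Dset_nonempty A s u C k)

lemma mval_nonpos {n : ℕ} (A : Matrix (Fin n) (Fin n) ℝ) (s : Fin n) (u : ℕ → ℝ)
    (C : Finset (Fin n)) (k : ℕ) : mval A s u C k ≤ 0 :=
  Finset.min'_le _ _ (Finset.mem_insert_self _ _)

lemma mval_le {n : ℕ} (A : Matrix (Fin n) (Fin n) ℝ) (s : Fin n) (u : ℕ → ℝ)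
    (C : Finset (Fin n)) {k j : ℕ} {c : Fin n} (hj : j ≤ k) (hc : c ∈ C) :
    mval A s u C k ≤ netTraj A s u j c := by
  apply Finset.min'_le
  exact Finset.mem_insert_of_mem (Finset.mem_image.2 ⟨(j, c),
    Finset.mem_product.2 ⟨Finset.mem_range.2 (Nat.lt_succ_of_le hj), hc⟩, rfl⟩)

lemma mval_succ_le {n : ℕ} (A : Matrix (Fin n) (Fin n) ℝ) (s : Fin n) (u : ℕ → ℝ)
    (C : Finset (Fin n)) (k : ℕ) : mval A s u C (k + 1) ≤ mval A s u C k := by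
  apply Finset.min'_le
  have h := Finset.min'_mem (Dset A s u C k) (Dset_nonempty A s u C k)
  rcases Finset.mem_insert.1 h with h0 | hm
  · rw [show mval A s u C k = 0 from h0]
    exact Finset.mem_insert_self _ _
  · rcases Finset.mem_image.1 hm with ⟨⟨j, c⟩, hjc, heq⟩
    rcases Finset.mem_product.1 hjc with ⟨hj, hc⟩
    refine Finset.mem_insert_of_mem (Finset.mem_image.2 ⟨(j, c), ?_, heq⟩)
    exact Finset.mem_product.2 ⟨Finset.mem_range.2
      (lt_of_lt_of_le (Finset.mem_range.1 hj) (Nat.le_succ _)), hc⟩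

/-- Key invariant: every vertex strictly behind the cut is bounded below by `m(k)`. -/
lemma key {n : ℕ} (A : Matrix (Fin n) (Fin n) ℝ)
    (hA : ∀ i j, 0 ≤ A i j) (hrow : ∀ i, ∑ j, A i j ≤ 1)
    (s : Fin n) (C : Finset (Fin n)) (hsC : s ∉ C) (u : ℕ → ℝ) :
    ∀ k : ℕ, ∀ q : Fin n, q ∉ C → q ≠ s →
      (∀ L p, IsDirPath A s q L p → ∃ i ≤ L, p i ∈ C) →
      mval A s u C k ≤ netTraj A s u k q := by
  intro k
  induction k with
  | zero =>
    intro q _ _ _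
    simpa [netTraj] using mval_nonpos A s u C 0
  | succ k ih =>
    intro q hqC hqs hcutq
    have hstep : netTraj A s u (k + 1) q = ∑ j, A q j * netTraj A s u k j := by
      simp [netTraj, Matrix.mulVec, dotProduct, Pi.single_eq_of_ne hqs]
    have hterm : ∀ j : Fin n, A q j * mval A s u C k ≤ A q j * netTraj A s u k j := by
      intro j
      rcases eq_or_lt_of_le (hA q j) with h0 | hpos
      · simp [← h0]
      refine mul_le_mul_of_nonneg_left ?_ (le_of_lt hpos)
      by_cases hjC : j ∈ C
      · exact mval_le A s u C le_rfl hjC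
      -- j is not in C: show j ≠ s and j satisfies the cut property, then apply ih
      have hjs : j ≠ s := by
        intro hjse
        have hp : IsDirPath A s q 1 (fun i => if i = 0 then s else q) := by
          refine ⟨rfl, rfl, ?_⟩
          intro i hi
          interval_cases i
          simpa [← hjse] using hpos
        rcases hcutq 1 _ hp with ⟨i, _, hiC⟩
        by_cases hi0 : i = 0
        · exact hsC (by simpa [hi0] using hiC)
        · exact hqC (by simpa [hi0] using hiC)
      have hcutj : ∀ L p, IsDirPath A s j L p → ∃ i ≤ L, p i ∈ C := by
        intro L p ⟨hp0, hpL, hpe⟩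
        have hp' : IsDirPath A s q (L + 1) (fun i => if i ≤ L then p i else q) := by
          refine ⟨by simp [hp0], by simp, ?_⟩
          intro i hi
          rcases Nat.lt_succ_iff_lt_or_eq.1 hi with hiL | hiL
          · simp only [Nat.succ_le_of_lt hiL, if_pos, le_of_lt hiL]
            simpa [Nat.succ_le_of_lt hiL, le_of_lt hiL] using hpe i hiL
          · subst hiL
            simpa [hpL] using hpos
        rcases hcutq (L + 1) _ hp' with ⟨i, hiL, hiC⟩
        by_cases hle : i ≤ L
        · exact ⟨i, hle, by simpa [hle] using hiC⟩
        · exact absurd (by simpa [hle] using hiC) hqC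
      exact ih j hjC hjs hcutj
    have hsum : (∑ j, A q j) * mval A s u C k ≤ netTraj A s u (k + 1) q := by
      rw [hstep, Finset.sum_mul]
      exact Finset.sum_le_sum fun j _ => hterm j
    have h1 : mval A s u C k ≤ (∑ j, A q j) * mval A s u C k := by
      have := mul_le_mul_of_nonpos_right (hrow q) (mval_nonpos A s u C k)
      simpa using this
    exact le_trans (mval_succ_le A s u C k) (le_trans h1 hsum)

end PLBaux

/-- For substochastic nonnegative `A`, any input `u`, and a
separating cutset `C` between `s` and `q*`, the response at the target satisfies
`x_{q*}(k) ≥ min(0, min_{c ∈ C} min_{0 ≤ j ≤ k} x_c(j))` for every `k`. -/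
theorem pointwise_lower_bound_cutset {n : ℕ} (A : Matrix (Fin n) (Fin n) ℝ)
    (hA : ∀ i j, 0 ≤ A i j) (hrow : ∀ i, ∑ j, A i j ≤ 1)
    (s qstar : Fin n) (hne : qstar ≠ s)
    (C : Finset (Fin n)) (hsC : s ∉ C) (hqC : qstar ∉ C)
    (hcut : ∀ L : ℕ, ∀ p : ℕ → Fin n,
      IsDirPath A s qstar L p → ∃ k ≤ L, p k ∈ C)
    (u : ℕ → ℝ) :
    ∀ k : ℕ, 0 ≤ netTraj A s u k qstar ∨
      ∃ c ∈ C, ∃ j ≤ k, netTraj A s u j c ≤ netTraj A s u k qstar := by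
  intro k
  have hbound := PLBaux.key A hA hrow s C hsC u k qstar hqC hne hcut
  have hmem := Finset.min'_mem (PLBaux.Dset A s u C k) (PLBaux.Dset_nonempty A s u C k)
  rcases Finset.mem_insert.1 hmem with h0 | hm
  · left
    calc (0 : ℝ) = PLBaux.mval A s u C k := h0.symm
    _ ≤ _ := hbound
  · rcases Finset.mem_image.1 hm with ⟨⟨j, c⟩, hjc, heq⟩
    rcases Finset.mem_product.1 hjc with ⟨hj, hc⟩
    right
    exact ⟨c, hc, j, Nat.lt_succ_iff.1 (Finset.mem_range.1 hj),
      le_trans (le_of_eq (show netTraj A s u j c = PLBaux.mval A s u C k from heq)) hbound⟩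
end

section
/- Let A be substochastic and C a separating cutset between source s and target q*. The Markov parameters M_i(k) = e_i^T A^k e_s satisfy, for every k: M_{q*}(k) ≤ max(0, max_{c ∈ C} max_{0 ≤ j ≤ k} M_c(j)). Since all M_i(k) ≥ 0, equivalently M_{q*}(k) ≤ max_{c ∈ C} max_{0 ≤ j ≤ k} M_c(j). -/
/-- For substochastic nonnegative `A` and a separating cutset `C`
between `s` and `q*`, the Markov parameters `M_i(k) = (A^k)_{i,s}` satisfy
`M_{q*}(k) ≤ max_{c ∈ C} max_{0 ≤ j ≤ k} M_c(j)` for every `k`. -/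
theorem markov_parameter_cutset_bound {n : ℕ} (A : Matrix (Fin n) (Fin n) ℝ)
    (hA : ∀ i j, 0 ≤ A i j) (hrow : ∀ i, ∑ j, A i j ≤ 1)
    (s qstar : Fin n) (hne : qstar ≠ s)
    (C : Finset (Fin n)) (hCne : C.Nonempty) (hsC : s ∉ C) (hqC : qstar ∉ C)
    (hcut : ∀ L : ℕ, ∀ p : ℕ → Fin n,
      IsDirPath A s qstar L p → ∃ k ≤ L, p k ∈ C) :
    ∀ k : ℕ, ∃ c ∈ C, ∃ j ≤ k, (A ^ k) qstar s ≤ (A ^ j) c s := by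
  -- nonnegativity of powers
  have hpow : ∀ k : ℕ, ∀ i j, 0 ≤ (A ^ k) i j := by
    intro k
    induction k with
    | zero => intro i j; simp [Matrix.one_apply]; positivity
    | succ k ih =>
      intro i j
      rw [pow_succ', Matrix.mul_apply]
      exact Finset.sum_nonneg fun l _ => mul_nonneg (hA i l) (ih l j)
  -- the bound B k = max_{c ∈ C} max_{j ≤ k} (A^j) c s
  set B : ℕ → ℝ := fun k =>
    C.sup' hCne fun c =>
      (Finset.range (k + 1)).sup' Finset.nonempty_range_add_one fun j => (A ^ j) c s
    with hBdef
  have hB_le : ∀ k : ℕ, ∀ c ∈ C, ∀ j ≤ k, (A ^ j) c s ≤ B k := by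
    intro k c hc j hj
    refine le_trans ?_ (Finset.le_sup' _ hc)
    exact Finset.le_sup' (fun j => (A ^ j) c s)
      (Finset.mem_range.2 (Nat.lt_succ_of_le hj))
  have hB_wit : ∀ k : ℕ, ∃ c ∈ C, ∃ j ≤ k, B k = (A ^ j) c s := by
    intro k
    obtain ⟨c, hc, hc2⟩ := Finset.exists_mem_eq_sup' hCne
      (fun c => (Finset.range (k + 1)).sup' Finset.nonempty_range_add_one
        fun j => (A ^ j) c s)
    obtain ⟨j, hj, hj2⟩ := Finset.exists_mem_eq_sup'
      (Finset.nonempty_range_add_one (n := k)) (fun j => (A ^ j) c s)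
    exact ⟨c, hc, j, Nat.lt_succ_iff.1 (Finset.mem_range.1 hj), hc2.trans hj2⟩
  have hB_nonneg : ∀ k : ℕ, 0 ≤ B k := by
    intro k
    obtain ⟨c, hc, j, hj, he⟩ := hB_wit k
    rw [he]; exact hpow j c s
  have hB_mono : ∀ k : ℕ, B k ≤ B (k + 1) := by
    intro k
    obtain ⟨c, hc, j, hj, he⟩ := hB_wit k
    rw [he]; exact hB_le (k + 1) c hc j (hj.trans (Nat.le_succ k))
  -- main induction
  have main : ∀ k : ℕ, ∀ v : Fin n, v ∉ C →
      (∀ L : ℕ, ∀ p : ℕ → Fin n, IsDirPath A s v L p → ∃ m ≤ L, p m ∈ C) →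
      (A ^ k) v s ≤ B k := by
    intro k
    induction k with
    | zero =>
      intro v hvC hvcut
      have hvs : v ≠ s := by
        intro h
        obtain ⟨m, hm, hmem⟩ := hvcut 0 (fun _ => s) ⟨rfl, h.symm, by omega⟩
        exact hsC hmem
      simp [Matrix.one_apply, hvs]
      exact hB_nonneg 0
    | succ k ih =>
      intro v hvC hvcut
      rw [pow_succ', Matrix.mul_apply]
      have hterm : ∀ l : Fin n, A v l * (A ^ k) l s ≤ A v l * B k := by
        intro l
        rcases eq_or_lt_of_le (hA v l) with h0 | hpos
        · rw [← h0, zero_mul, zero_mul]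
        refine mul_le_mul_of_nonneg_left ?_ (hA v l)
        by_cases hlC : l ∈ C
        · exact hB_le k l hlC k le_rfl
        · refine ih l hlC ?_
          intro L p hp
          obtain ⟨hp0, hpL, hpe⟩ := hp
          set p' : ℕ → Fin n := fun m => if m = L + 1 then v else p m with hp'
          have hpath : IsDirPath A s v (L + 1) p' := by
            refine ⟨?_, ?_, ?_⟩
            · simp [hp', hp0]
            · simp [hp']
            · intro m hm
              rcases Nat.lt_succ_iff_lt_or_eq.1 hm with hm' | hm'
              · have h1 : m + 1 ≠ L + 1 := by omega
                have h2 : m ≠ L + 1 := by omega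
                simp only [hp', h1, h2, if_false]
                exact hpe m hm'
              · have h1 : m + 1 = L + 1 := by omega
                have h2 : m ≠ L + 1 := by omega
                simp only [hp', h1, if_pos rfl, h2, if_false]
                rw [hm', hpL]
                exact hpos
          obtain ⟨m, hm, hmem⟩ := hvcut (L + 1) p' hpath
          have hmne : m ≠ L + 1 := by
            intro h; subst h
            simp [hp'] at hmem
            exact hvC hmem
          refine ⟨m, by omega, ?_⟩
          simpa [hp', hmne] using hmem
      calc ∑ l, A v l * (A ^ k) l s ≤ ∑ l, A v l * B k :=
            Finset.sum_le_sum fun l _ => hterm l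
        _ = (∑ l, A v l) * B k := by rw [Finset.sum_mul]
        _ ≤ 1 * B k :=
            mul_le_mul_of_nonneg_right (hrow v) (hB_nonneg k)
        _ = B k := one_mul _
        _ ≤ B (k + 1) := hB_mono k
  intro k
  obtain ⟨c, hc, j, hj, he⟩ := hB_wit k
  exact ⟨c, hc, j, hj, he ▸ main k qstar hqC hcut⟩
end

section
/- Let A be substochastic nonnegative and let the node dynamics be X(k+1) = A X(k) + e_s u(k), X(0) = 0, with C a separating cutset between s and q*, and assume every vertex q reachable from s with q ≠ s has self-weight a_{qq} < 1. Then for every input u and horizon k_f: ∑_{k=0}^{k_f} |x_{q*}(k)|^2 ≤ max_{c ∈ C} ∑_{k=0}^{k_f} |x_c(k)|^2. -/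
/-- Reachable from `s` by a path avoiding the cutset `C`. -/
def AvoidReach {n : ℕ} (A : Matrix (Fin n) (Fin n) ℝ) (s : Fin n)
    (C : Finset (Fin n)) (j : Fin n) : Prop :=
  ∃ L p, IsDirPath A s j L p ∧ ∀ k ≤ L, p k ∉ C

lemma avoidReach_self {n : ℕ} (A : Matrix (Fin n) (Fin n) ℝ) (s : Fin n)
    (C : Finset (Fin n)) (hsC : s ∉ C) : AvoidReach A s C s := by
  refine ⟨0, fun _ => s, ⟨rfl, rfl, fun k hk => absurd hk (Nat.not_lt_zero k)⟩,
    fun k _ => hsC⟩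

lemma avoidReach_extend {n : ℕ} (A : Matrix (Fin n) (Fin n) ℝ) (s : Fin n)
    (C : Finset (Fin n)) {j v : Fin n} (hj : AvoidReach A s C j)
    (hAv : 0 < A v j) (hvC : v ∉ C) : AvoidReach A s C v := by
  obtain ⟨L, p, ⟨h0, hL, hstep⟩, hav⟩ := hj
  refine ⟨L + 1, fun k => if k ≤ L then p k else v, ⟨?_, ?_, ?_⟩, ?_⟩
  · simpa using h0
  · simp
  · intro k hk
    beta_reduce
    rcases Nat.lt_or_ge k L with h | h
    · rw [if_pos (Nat.le_of_lt h), if_pos (Nat.succ_le_of_lt h)]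
      exact hstep k h
    · have hk' : k = L := le_antisymm (Nat.lt_succ_iff.mp hk) h
      rw [hk', if_neg (Nat.not_succ_le_self L), if_pos le_rfl, hL]
      exact hAv
  · intro k hk
    beta_reduce
    by_cases h : k ≤ L
    · rw [if_pos h]; exact hav k h
    · rw [if_neg h]; exact hvC

/-- Jensen's inequality for squares with subprobability weights. -/
lemma jensen_sq {ι : Type*} (s : Finset ι) (w x : ι → ℝ)
    (hw : ∀ i ∈ s, 0 ≤ w i) (hw1 : ∑ i ∈ s, w i ≤ 1) :
    (∑ i ∈ s, w i * x i) ^ 2 ≤ ∑ i ∈ s, w i * x i ^ 2 := by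
  have hcs := Finset.sum_mul_sq_le_sq_mul_sq s (fun i => Real.sqrt (w i))
    (fun i => Real.sqrt (w i) * x i)
  calc (∑ i ∈ s, w i * x i) ^ 2
      = (∑ i ∈ s, Real.sqrt (w i) * (Real.sqrt (w i) * x i)) ^ 2 := by
        congr 1
        refine Finset.sum_congr rfl fun i hi => ?_
        rw [← mul_assoc, Real.mul_self_sqrt (hw i hi)]
    _ ≤ (∑ i ∈ s, Real.sqrt (w i) ^ 2) * ∑ i ∈ s, (Real.sqrt (w i) * x i) ^ 2 := hcs
    _ = (∑ i ∈ s, w i) * ∑ i ∈ s, w i * x i ^ 2 := by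
        congr 1
        · exact Finset.sum_congr rfl fun i hi => Real.sq_sqrt (hw i hi)
        · refine Finset.sum_congr rfl fun i hi => ?_
          rw [mul_pow, Real.sq_sqrt (hw i hi)]
    _ ≤ 1 * ∑ i ∈ s, w i * x i ^ 2 := by
        refine mul_le_mul_of_nonneg_right hw1 ?_
        exact Finset.sum_nonneg fun i hi => mul_nonneg (hw i hi) (sq_nonneg _)
    _ = ∑ i ∈ s, w i * x i ^ 2 := one_mul _

/-- Energy (p = 2) cutset inequality: with substochastic
nonnegative `A`, separating cutset `C` between `s` and `q*`, and self-weights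
`a_{qq} < 1` for every `q ≠ s` reachable from `s`, for every input `u` and
horizon `k_f` there is a cutset node whose energy dominates the target energy. -/
theorem energy_cutset_bound {n : ℕ} (A : Matrix (Fin n) (Fin n) ℝ)
    (hA : ∀ i j, 0 ≤ A i j) (hrow : ∀ i, ∑ j, A i j ≤ 1)
    (s qstar : Fin n) (hne : qstar ≠ s)
    (C : Finset (Fin n)) (hCne : C.Nonempty) (hsC : s ∉ C) (hqC : qstar ∉ C)
    (hcut : ∀ L : ℕ, ∀ p : ℕ → Fin n,
      IsDirPath A s qstar L p → ∃ k ≤ L, p k ∈ C)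
    (hself : ∀ q : Fin n, q ≠ s →
      (∃ L : ℕ, ∃ p : ℕ → Fin n, IsDirPath A s q L p) → A q q < 1)
    (u : ℕ → ℝ) (kf : ℕ) :
    ∃ c ∈ C,
      ∑ k ∈ Finset.range (kf + 1), |netTraj A s u k qstar| ^ 2 ≤
      ∑ k ∈ Finset.range (kf + 1), |netTraj A s u k c| ^ 2 := by
  classical
  set X := netTraj A s u with hXdef
  have hX0 : ∀ v, X 0 v = 0 := fun v => rfl
  have hqS0 : ¬ AvoidReach A s C qstar := by
    rintro ⟨L, p, hp, hav⟩
    obtain ⟨k, hk, hkC⟩ := hcut L p hp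
    exact hav k hk hkC
  have hedge : ∀ v j, ¬ AvoidReach A s C v → v ∉ C → AvoidReach A s C j →
      A v j = 0 := by
    intro v j hv hvC hj
    by_contra h
    exact hv (avoidReach_extend A s C hj (lt_of_le_of_ne (hA v j) (Ne.symm h)) hvC)
  obtain ⟨c0, hc0, hmax⟩ := Finset.exists_max_image C
    (fun c => ∑ k ∈ Finset.range (kf + 1), (X k c) ^ 2) hCne
  set M := ∑ k ∈ Finset.range (kf + 1), (X k c0) ^ 2 with hMdef
  have hM0 : 0 ≤ M := Finset.sum_nonneg fun _ _ => sq_nonneg _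
  have key : ∀ K, K ≤ kf + 1 → ∀ v, ¬ AvoidReach A s C v → v ∉ C →
      ∑ k ∈ Finset.range K, (X k v) ^ 2 ≤ M := by
    intro K
    induction K with
    | zero => intro _ v _ _; simpa using hM0
    | succ K ih =>
      intro hK v hv hvC
      have hvs : v ≠ s := fun h => hv (h ▸ avoidReach_self A s C hsC)
      have step : ∀ k, (X (k + 1) v) ^ 2 ≤ ∑ j, A v j * (X k j) ^ 2 := by
        intro k
        have hXs : X (k + 1) v = ∑ j, A v j * X k j := by
          have hstep1 : X (k + 1) = A.mulVec (X k) + Pi.single s (u k) := rfl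
          rw [hstep1]
          simp [Matrix.mulVec, dotProduct, Pi.single_eq_of_ne hvs]
        rw [hXs]
        exact jensen_sq _ _ _ (fun j _ => hA v j) (hrow v)
      have hjb : ∀ j : Fin n, A v j * ∑ k ∈ Finset.range K, (X k j) ^ 2 ≤
          A v j * M := by
        intro j
        by_cases hj : AvoidReach A s C j
        · rw [hedge v j hv hvC hj]; simp
        · refine mul_le_mul_of_nonneg_left ?_ (hA v j)
          by_cases hjC : j ∈ C
          · calc ∑ k ∈ Finset.range K, (X k j) ^ 2
                ≤ ∑ k ∈ Finset.range (kf + 1), (X k j) ^ 2 := by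
                  refine Finset.sum_le_sum_of_subset_of_nonneg
                    (Finset.range_subset_range.mpr (Nat.le_of_succ_le hK)) fun k _ _ => sq_nonneg _
              _ ≤ M := hmax j hjC
          · exact ih (Nat.le_of_succ_le hK) j hj hjC
      calc ∑ k ∈ Finset.range (K + 1), (X k v) ^ 2
          = ∑ k ∈ Finset.range K, (X (k + 1) v) ^ 2 + (X 0 v) ^ 2 :=
            Finset.sum_range_succ' _ _
        _ = ∑ k ∈ Finset.range K, (X (k + 1) v) ^ 2 := by rw [hX0 v]; simp
        _ ≤ ∑ k ∈ Finset.range K, ∑ j, A v j * (X k j) ^ 2 :=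
            Finset.sum_le_sum fun k _ => step k
        _ = ∑ j, A v j * ∑ k ∈ Finset.range K, (X k j) ^ 2 := by
            rw [Finset.sum_comm]
            exact Finset.sum_congr rfl fun j _ => (Finset.mul_sum _ _ _).symm
        _ ≤ ∑ j, A v j * M := Finset.sum_le_sum fun j _ => hjb j
        _ = (∑ j, A v j) * M := (Finset.sum_mul _ _ _).symm
        _ ≤ 1 * M := mul_le_mul_of_nonneg_right (hrow v) hM0
        _ = M := one_mul M
  refine ⟨c0, hc0, ?_⟩
  simp only [sq_abs]
  exact key (kf + 1) le_rfl qstar hqS0 hqC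
end

section
/- Let A be substochastic nonnegative, with dynamics X(k+1) = A X(k) + e_s u(k), X(0)=0. Define the distance-d level sets D_d = set of vertices at directed graph distance exactly d from s. Then for p ∈ {1, 2, ∞} (indeed any p ≥ 1) and any horizon k_f, the map d ↦ max_{i ∈ D_d} G_p(i, k_f) is nonincreasing in d wherever D_d and D_{d+1} are nonempty, assuming all vertices at positive distance have self-weight strictly less than 1. -/
/-- `i` is at directed graph distance exactly `d` from `s` in the digraph of `A`. -/
def DistEq {n : ℕ} (A : Matrix (Fin n) (Fin n) ℝ) (s i : Fin n) (d : ℕ) : Prop :=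
  (∃ p : ℕ → Fin n, IsDirPath A s i d p) ∧
  ∀ d' < d, ¬ ∃ p : ℕ → Fin n, IsDirPath A s i d' p

/-- Finite-horizon `l_p` gain of the network from input at `s` to output at node `i`. -/
noncomputable def lpGain {n : ℕ} (A : Matrix (Fin n) (Fin n) ℝ) (s i : Fin n)
    (p : ℝ) (kf : ℕ) : ℝ :=
  sSup {g : ℝ | ∃ u : ℕ → ℝ,
    (∑ k ∈ Finset.range (kf + 1), |u k| ^ p) ^ (1 / p) = 1 ∧
    g = (∑ k ∈ Finset.range (kf + 1), |netTraj A s u k i| ^ p) ^ (1 / p)}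

/-!
A vertex `q` at distance greater than `d` from `s` is not `s`, and each of its in-neighbours is
at distance exactly `d` or again greater than `d`: the level set `D_d` is a cut. Off `D_d` the
state therefore obeys `|x (k+1) q| ≤ ∑ m, A q m * |x k m|`, and since the rows of `A` have mass
at most one, Jensen's inequality turns this into the same recursion for `|x k q| ^ p`. Any
quantity obeying that recursion and starting from zero stays below its largest value on `D_d`
(a discrete maximum principle). Applied, for a fixed input, to the accumulated energy
`∑ k, |x k q| ^ p` and to `|x k q|` at each time, this dominates the output at a vertex of
`D_(d+1)` by the output at some vertex of `D_d`; taking suprema over inputs compares the gains.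
-/

open Finset

section Substochastic

variable {ι : Type*} [Fintype ι]

lemma abs_sum_mul_le_sum_mul_abs {w x : ι → ℝ} (hw : ∀ j, 0 ≤ w j) :
    |∑ j, w j * x j| ≤ ∑ j, w j * |x j| :=
  (abs_sum_le_sum_abs _ _).trans_eq <| sum_congr rfl fun j _ => by
    rw [abs_mul, abs_of_nonneg (hw j)]

lemma sum_mul_le_of_sum_le_one {w b : ι → ℝ} {B : ℝ} (hw : ∀ j, 0 ≤ w j)
    (hw1 : ∑ j, w j ≤ 1) (hB : 0 ≤ B) (hb : ∀ j, 0 < w j → b j ≤ B) :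
    ∑ j, w j * b j ≤ B :=
  calc ∑ j, w j * b j ≤ ∑ j, w j * B := sum_le_sum fun j _ => by
        rcases (hw j).eq_or_lt with hj | hj
        · simp [← hj]
        · exact mul_le_mul_of_nonneg_left (hb j hj) (hw j)
    _ = (∑ j, w j) * B := (sum_mul ..).symm
    _ ≤ B := mul_le_of_le_one_left hB hw1

/-- Jensen's inequality, with the missing mass `1 - ∑ j, w j` placed at `0`. -/
lemma rpow_sum_mul_le_sum_mul_rpow {w z : ι → ℝ} (hw : ∀ j, 0 ≤ w j) (hw1 : ∑ j, w j ≤ 1)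
    (hz : ∀ j, 0 ≤ z j) {p : ℝ} (hp : 1 ≤ p) :
    (∑ j, w j * z j) ^ p ≤ ∑ j, w j * z j ^ p := by
  have := (convexOn_rpow hp).map_add_sum_le (t := univ) (v := 1 - ∑ j, w j) (q := 0)
    (fun j _ => hw j) (by ring) (fun j _ => hz j) (by linarith) Set.self_mem_Ici
  simpa [Real.zero_rpow (by linarith : p ≠ 0)] using this

lemma exists_forall_le_of_le_sum_mul {A : Matrix ι ι ℝ} (hA : ∀ i j, 0 ≤ A i j)
    (hrow : ∀ i, ∑ j, A i j ≤ 1) {F : Set ι} {D : Finset ι} (hD : D.Nonempty)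
    (hadj : ∀ q ∈ F, ∀ m, 0 < A q m → m ∈ F ∨ m ∈ D) {Z : ℕ → ι → ℝ} {W : ι → ℝ} {kf : ℕ}
    (hW : ∀ c ∈ D, 0 ≤ W c) (hZW : ∀ K ≤ kf, ∀ c ∈ D, Z K c ≤ W c)
    (hZ0 : ∀ q ∈ F, Z 0 q ≤ 0) (hstep : ∀ K < kf, ∀ q ∈ F, Z (K + 1) q ≤ ∑ m, A q m * Z K m)
    {q : ι} (hq : q ∈ F) : ∃ c ∈ D, ∀ K ≤ kf, Z K q ≤ W c := by
  obtain ⟨c, hcD, hc⟩ := D.exists_max_image W hD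
  refine ⟨c, hcD, fun K hK => ?_⟩
  induction K generalizing q with
  | zero => exact (hZ0 q hq).trans (hW c hcD)
  | succ K ih =>
    refine (hstep K hK q hq).trans <| sum_mul_le_of_sum_le_one (hA q) (hrow q) (hW c hcD)
      fun m hm => ?_
    rcases hadj q hq m hm with hmF | hmD
    · exact ih hmF (by omega)
    · exact (hZW K (by omega) m hmD).trans (hc m hmD)

end Substochastic

lemma abs_le_one_of_rpow_sum_eq_one {ι : Type*} {t : Finset ι} {f : ι → ℝ} {p : ℝ} (hp : 0 < p)
    (hf : (∑ k ∈ t, |f k| ^ p) ^ (1 / p) = 1) {k : ι} (hk : k ∈ t) : |f k| ≤ 1 :=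
  calc |f k| = (|f k| ^ p) ^ (1 / p) := by rw [one_div, Real.rpow_rpow_inv (abs_nonneg _) hp.ne']
    _ ≤ (∑ k ∈ t, |f k| ^ p) ^ (1 / p) := by
        gcongr
        exact single_le_sum (f := fun k => |f k| ^ p) (fun k _ => by positivity) hk
    _ = 1 := hf

lemma exists_sSup_le_sSup_of_forall_exists_le {ι : Type*} [Finite ι] {P : ι → Prop}
    (hP : ∃ c, P c) {S : ι → Set ℝ} (hbdd : ∀ c, BddAbove (S c))
    (hnonneg : ∀ c, ∀ g ∈ S c, 0 ≤ g) {T : Set ℝ} (hT : ∀ g ∈ T, ∃ c, P c ∧ ∃ g' ∈ S c, g ≤ g') :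
    ∃ c, P c ∧ sSup T ≤ sSup (S c) := by
  obtain ⟨c, hc, hmax⟩ := Set.exists_max_image {c | P c} (fun c => sSup (S c)) (Set.toFinite _) hP
  refine ⟨c, hc, Real.sSup_le (fun g hg => ?_) (Real.sSup_nonneg (hnonneg c))⟩
  obtain ⟨c', hc', g', hg', hle⟩ := hT g hg
  exact hle.trans <| (le_csSup (hbdd c') hg').trans (hmax c' hc')

section Network

variable {n : ℕ} {A : Matrix (Fin n) (Fin n) ℝ} {s : Fin n}

lemma IsDirPath.extend {t q : Fin n} {L : ℕ} {p : ℕ → Fin n} (hp : IsDirPath A s t L p)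
    (hqt : 0 < A q t) : IsDirPath A s q (L + 1) (Function.update p (L + 1) q) := by
  obtain ⟨hp0, hpL, hstep⟩ := hp
  refine ⟨by simp [hp0], by simp, fun k hk => ?_⟩
  rcases Nat.lt_succ_iff_lt_or_eq.1 hk with hk | rfl
  · simpa [Function.update_of_ne (show k + 1 ≠ L + 1 by omega),
      Function.update_of_ne (show k ≠ L + 1 by omega)] using hstep k hk
  · simpa [Function.update_of_ne (show k ≠ k + 1 by omega), hpL] using hqt

/-- `i` is at directed distance more than `d` from `s`, or not reachable from `s` at all. -/
def DistGt (A : Matrix (Fin n) (Fin n) ℝ) (s i : Fin n) (d : ℕ) : Prop :=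
  ∀ e ≤ d, ¬ ∃ p : ℕ → Fin n, IsDirPath A s i e p

lemma DistEq.distGt {i : Fin n} {d : ℕ} (h : DistEq A s i (d + 1)) : DistGt A s i d :=
  fun e he => h.2 e (Nat.lt_succ_of_le he)

lemma DistGt.ne_source {q : Fin n} {d : ℕ} (hq : DistGt A s q d) : q ≠ s := by
  rintro rfl
  exact hq 0 d.zero_le ⟨fun _ => q, rfl, rfl, fun _ hk => absurd hk (Nat.not_lt_zero _)⟩

lemma DistGt.of_pos_entry {q m : Fin n} {d : ℕ} (hq : DistGt A s q d) (hqm : 0 < A q m) :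
    DistGt A s m d ∨ DistEq A s m d := by
  have hnear : ∀ e < d, ¬ ∃ p, IsDirPath A s m e p := fun e he ⟨p, hp⟩ =>
    hq (e + 1) he ⟨_, hp.extend hqm⟩
  by_cases hfar : DistGt A s m d
  · exact .inl hfar
  · obtain ⟨e, he, hpath⟩ : ∃ e ≤ d, ∃ p, IsDirPath A s m e p := by simpa [DistGt] using hfar
    obtain rfl : e = d := he.eq_of_not_lt fun h => hnear e h hpath
    exact .inr ⟨hpath, hnear⟩

lemma DistGt.exists_distEq_forall_le (hA : ∀ i j, 0 ≤ A i j)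
    (hrow : ∀ i, ∑ j, A i j ≤ 1) {d : ℕ} (hd : ∃ c, DistEq A s c d) {Z : ℕ → Fin n → ℝ}
    {W : Fin n → ℝ} {kf : ℕ} (hW : ∀ c, DistEq A s c d → 0 ≤ W c)
    (hZW : ∀ K ≤ kf, ∀ c, DistEq A s c d → Z K c ≤ W c) (hZ0 : ∀ q, Z 0 q ≤ 0)
    (hstep : ∀ K < kf, ∀ q, q ≠ s → Z (K + 1) q ≤ ∑ m, A q m * Z K m)
    {q : Fin n} (hq : DistGt A s q d) : ∃ c, DistEq A s c d ∧ ∀ K ≤ kf, Z K q ≤ W c := by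
  classical
  obtain ⟨c, hc, hle⟩ := exists_forall_le_of_le_sum_mul hA hrow (F := {q | DistGt A s q d})
    (D := univ.filter (DistEq A s · d)) (by simpa [Finset.Nonempty] using hd)
    (fun q hq m hm => by simpa using hq.of_pos_entry hm)
    (by simpa using hW) (by simpa using hZW) (fun q _ => hZ0 q)
    (fun K hK q hq => hstep K hK q hq.ne_source) hq
  exact ⟨c, (mem_filter.1 hc).2, hle⟩

@[simp]
lemma netTraj_zero (u : ℕ → ℝ) : netTraj A s u 0 = 0 := rfl

lemma netTraj_succ_apply_of_ne (u : ℕ → ℝ) (k : ℕ) {q : Fin n} (hq : q ≠ s) :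
    netTraj A s u (k + 1) q = ∑ m, A q m * netTraj A s u k m := by
  simp [netTraj, Matrix.mulVec, dotProduct, hq]

lemma abs_netTraj_succ_le_of_ne (hA : ∀ i j, 0 ≤ A i j) (u : ℕ → ℝ) (k : ℕ) {q : Fin n}
    (hq : q ≠ s) : |netTraj A s u (k + 1) q| ≤ ∑ m, A q m * |netTraj A s u k m| := by
  rw [netTraj_succ_apply_of_ne u k hq]
  exact abs_sum_mul_le_sum_mul_abs (hA q)

lemma abs_netTraj_le (hA : ∀ i j, 0 ≤ A i j) (hrow : ∀ i, ∑ j, A i j ≤ 1) {u : ℕ → ℝ}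
    {K : ℕ} (hu : ∀ k < K, |u k| ≤ 1) : ∀ k ≤ K, ∀ j, |netTraj A s u k j| ≤ k := by
  intro k hk j
  induction k generalizing j with
  | zero => simp
  | succ k ih =>
    have hAx : |A.mulVec (netTraj A s u k) j| ≤ k :=
      (abs_sum_mul_le_sum_mul_abs (hA j)).trans <|
        sum_mul_le_of_sum_le_one (hA j) (hrow j) k.cast_nonneg fun m _ => ih (by omega) m
    have hsingle : |(Pi.single s (u k) : Fin n → ℝ) j| ≤ 1 := by
      rcases eq_or_ne j s with rfl | hj
      · simpa using hu k (by omega)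
      · simp [hj]
    calc |netTraj A s u (k + 1) j|
        ≤ |A.mulVec (netTraj A s u k) j| + |(Pi.single s (u k) : Fin n → ℝ) j| := abs_add_le _ _
      _ ≤ (k + 1 : ℕ) := by push_cast; linarith

lemma abs_netTraj_succ_rpow_le_of_ne (hA : ∀ i j, 0 ≤ A i j) (hrow : ∀ i, ∑ j, A i j ≤ 1)
    {p : ℝ} (hp : 1 ≤ p) (u : ℕ → ℝ) (k : ℕ) {q : Fin n} (hq : q ≠ s) :
    |netTraj A s u (k + 1) q| ^ p ≤ ∑ m, A q m * |netTraj A s u k m| ^ p :=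
  (Real.rpow_le_rpow (abs_nonneg _) (abs_netTraj_succ_le_of_ne hA u k hq) (by linarith)).trans
    (rpow_sum_mul_le_sum_mul_rpow (hA q) (hrow q) (fun _ => abs_nonneg _) hp)

lemma DistGt.exists_sum_rpow_le (hA : ∀ i j, 0 ≤ A i j) (hrow : ∀ i, ∑ j, A i j ≤ 1)
    {p : ℝ} (hp : 1 ≤ p) (u : ℕ → ℝ) (kf : ℕ) {d : ℕ} (hd : ∃ c, DistEq A s c d)
    {q : Fin n} (hq : DistGt A s q d) :
    ∃ c, DistEq A s c d ∧ ∑ k ∈ range (kf + 1), |netTraj A s u k q| ^ p ≤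
      ∑ k ∈ range (kf + 1), |netTraj A s u k c| ^ p := by
  have hp0 : p ≠ 0 := by positivity
  have hstep (K : ℕ) (q : Fin n) (hq : q ≠ s) :
      ∑ k ∈ range (K + 1 + 1), |netTraj A s u k q| ^ p ≤
        ∑ m, A q m * ∑ k ∈ range (K + 1), |netTraj A s u k m| ^ p :=
    calc ∑ k ∈ range (K + 1 + 1), |netTraj A s u k q| ^ p
        = ∑ k ∈ range (K + 1), |netTraj A s u (k + 1) q| ^ p := by
          simp [sum_range_succ' _ (K + 1), Real.zero_rpow hp0]
      _ ≤ ∑ k ∈ range (K + 1), ∑ m, A q m * |netTraj A s u k m| ^ p :=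
          sum_le_sum fun k _ => abs_netTraj_succ_rpow_le_of_ne hA hrow hp u k hq
      _ = ∑ m, A q m * ∑ k ∈ range (K + 1), |netTraj A s u k m| ^ p := by
          rw [sum_comm]; simp only [mul_sum]
  obtain ⟨c, hc, hle⟩ := hq.exists_distEq_forall_le hA hrow hd (kf := kf)
    (Z := fun K q => ∑ k ∈ range (K + 1), |netTraj A s u k q| ^ p)
    (W := fun c => ∑ k ∈ range (kf + 1), |netTraj A s u k c| ^ p)
    (fun _ _ => by positivity)
    (fun K hK _ _ => sum_le_sum_of_subset_of_nonneg (range_subset_range.2 (by omega))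
      fun _ _ _ => by positivity)
    (fun q => by simp [Real.zero_rpow hp0]) (fun K _ => hstep K)
  exact ⟨c, hc, hle kf le_rfl⟩

lemma DistGt.exists_sup'_abs_le (hA : ∀ i j, 0 ≤ A i j) (hrow : ∀ i, ∑ j, A i j ≤ 1)
    (u : ℕ → ℝ) (kf : ℕ) {d : ℕ} (hd : ∃ c, DistEq A s c d) {q : Fin n}
    (hq : DistGt A s q d) :
    ∃ c, DistEq A s c d ∧ (range (kf + 1)).sup' nonempty_range_add_one
        (fun k => |netTraj A s u k q|) ≤
      (range (kf + 1)).sup' nonempty_range_add_one (fun k => |netTraj A s u k c|) := by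
  obtain ⟨c, hc, hle⟩ := hq.exists_distEq_forall_le hA hrow hd (kf := kf)
    (Z := fun K q => |netTraj A s u K q|)
    (fun _ _ => le_sup'_of_le _ (mem_range.2 kf.succ_pos) (abs_nonneg _))
    (fun K hK _ _ => le_sup' (fun k => |netTraj A s u k _|) (mem_range.2 (by omega)))
    (fun q => by simp) (fun K _ q hq => abs_netTraj_succ_le_of_ne hA u K hq)
  exact ⟨c, hc, sup'_le _ _ fun K hK => hle K (Nat.lt_succ_iff.1 (mem_range.1 hK))⟩

lemma DistGt.exists_lpGain_le (hA : ∀ i j, 0 ≤ A i j) (hrow : ∀ i, ∑ j, A i j ≤ 1)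
    {p : ℝ} (hp : 1 ≤ p) (kf : ℕ) {d : ℕ} (hd : ∃ c, DistEq A s c d) {q : Fin n}
    (hq : DistGt A s q d) : ∃ c, DistEq A s c d ∧ lpGain A s q p kf ≤ lpGain A s c p kf := by
  have hp_pos : 0 < p := by linarith
  refine exists_sSup_le_sSup_of_forall_exists_le hd (fun c => ?_) ?_ ?_
  · refine ⟨((kf + 1) * (kf : ℝ) ^ p) ^ (1 / p), ?_⟩
    rintro g ⟨u, hu, rfl⟩
    have hx := abs_netTraj_le hA hrow (s := s) (u := u) (K := kf) fun k hk =>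
      abs_le_one_of_rpow_sum_eq_one hp_pos hu (mem_range.2 (by omega))
    gcongr
    calc ∑ k ∈ range (kf + 1), |netTraj A s u k c| ^ p
        ≤ ∑ k ∈ range (kf + 1), (kf : ℝ) ^ p := sum_le_sum fun k hk => by
          have hk := Nat.lt_succ_iff.1 (mem_range.1 hk)
          gcongr
          exact (hx k hk c).trans (Nat.cast_le.2 hk)
      _ = (kf + 1) * (kf : ℝ) ^ p := by simp
  · rintro c g ⟨u, -, rfl⟩
    positivity
  · rintro g ⟨u, hu, rfl⟩
    obtain ⟨c, hc, hle⟩ := hq.exists_sum_rpow_le hA hrow hp u kf hd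
    exact ⟨c, hc, _, ⟨u, hu, rfl⟩, by gcongr⟩

lemma DistGt.exists_linfGain_le (hA : ∀ i j, 0 ≤ A i j) (hrow : ∀ i, ∑ j, A i j ≤ 1)
    (kf : ℕ) {d : ℕ} (hd : ∃ c, DistEq A s c d) {q : Fin n}
    (hq : DistGt A s q d) : ∃ c, DistEq A s c d ∧ linfGain A s q kf ≤ linfGain A s c kf := by
  refine exists_sSup_le_sSup_of_forall_exists_le hd (fun c => ⟨kf, ?_⟩) ?_ ?_
  · rintro g ⟨u, hu, rfl⟩
    refine sup'_le _ _ fun k hk => ?_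
    have hk := Nat.lt_succ_iff.1 (mem_range.1 hk)
    exact (abs_netTraj_le hA hrow (fun k' hk' => hu k' hk'.le) k hk c).trans (Nat.cast_le.2 hk)
  · rintro c g ⟨u, -, rfl⟩
    exact le_sup'_of_le _ (mem_range.2 kf.succ_pos) (abs_nonneg _)
  · rintro g ⟨u, hu, rfl⟩
    obtain ⟨c, hc, hle⟩ := hq.exists_sup'_abs_le hA hrow u kf hd
    exact ⟨c, hc, _, ⟨u, hu, rfl⟩, hle⟩

end Network

theorem max_gain_nonincreasing_in_distance_general {n : ℕ}
    (A : Matrix (Fin n) (Fin n) ℝ)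
    (hA : ∀ i j, 0 ≤ A i j) (hrow : ∀ i, ∑ j, A i j ≤ 1)
    (s : Fin n)
    (d : ℕ)
    (hDd : ∃ i, DistEq A s i d)
    (kf : ℕ) :
    (∀ p : ℝ, 1 ≤ p → ∀ i, DistEq A s i (d + 1) →
      ∃ c, DistEq A s c d ∧ lpGain A s i p kf ≤ lpGain A s c p kf) ∧
    (∀ i, DistEq A s i (d + 1) →
      ∃ c, DistEq A s c d ∧ linfGain A s i kf ≤ linfGain A s c kf) :=
  ⟨fun _ hp _ hi => hi.distGt.exists_lpGain_le hA hrow hp kf hDd,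
    fun _ hi => hi.distGt.exists_linfGain_le hA hrow kf hDd⟩

/-- For substochastic nonnegative `A`, assuming all vertices at
positive distance from `s` have self-weight `< 1`, the maximum finite-horizon
gain over the distance-`d` level set is nonincreasing in `d` (where the level
sets are nonempty): every node at distance `d+1` has gain dominated by that of
some node at distance `d`; this holds for every `l_p` gain (`1 ≤ p < ∞`) and
for the `l_∞` gain. -/
theorem max_gain_nonincreasing_in_distance {n : ℕ}
    (A : Matrix (Fin n) (Fin n) ℝ)
    (hA : ∀ i j, 0 ≤ A i j) (hrow : ∀ i, ∑ j, A i j ≤ 1)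
    (s : Fin n)
    (hself : ∀ q : Fin n, (∃ d > 0, DistEq A s q d) → A q q < 1)
    (d : ℕ)
    (hDd : ∃ i, DistEq A s i d) (hDd1 : ∃ i, DistEq A s i (d + 1))
    (kf : ℕ) :
    (∀ p : ℝ, 1 ≤ p → ∀ i, DistEq A s i (d + 1) →
      ∃ c, DistEq A s c d ∧ lpGain A s i p kf ≤ lpGain A s c p kf) ∧
    (∀ i, DistEq A s i (d + 1) →
      ∃ c, DistEq A s c d ∧ linfGain A s i kf ≤ linfGain A s c kf) :=
  max_gain_nonincreasing_in_distance_general A hA hrow s d hDd kf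
end
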